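/- arXiv:1705.03489 — 5 statements merged into one kernel-verified Lean document; each statement's English description precedes it below -/
import Mathlib

section
/- Let M be a uniform R-module. Then M is completely prime if and only if every cyclic submodule Rm of M is a completely prime module. -/
/-!
If `a` kills a nonzero `m`, complete primeness of `Rm` makes `a` kill all of `Rm`. For any nonzero
`x`, uniformity gives a nonzero `w ∈ Rm ∩ Rx`; then `a • w = 0`, and complete primeness of `Rx`
makes `a` kill `x`.
-/

open Submodule

namespace Module

def IsCompletelyPrime (R M : Type*) [Ring R] [AddCommGroup M] [Module R M] : Prop :=
  ∀ (a : R) (m : M), a • m = 0 → m = 0 ∨ ∀ x : M, a • x = 0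

variable {R M : Type*} [Ring R] [AddCommGroup M] [Module R M]

theorem IsCompletelyPrime.submodule (h : IsCompletelyPrime R M) (N : Submodule R M) :
    IsCompletelyPrime R N := by
  intro a x hax
  rcases h a x (congrArg Subtype.val hax) with hx | hall
  · exact .inl (Subtype.ext hx)
  · exact .inr fun y ↦ Subtype.ext (hall y)

theorem IsCompletelyPrime.smul_eq_zero_of_mem {N : Submodule R M} (h : IsCompletelyPrime R N)
    {a : R} {w y : M} (hw : w ∈ N) (hw0 : w ≠ 0) (haw : a • w = 0) (hy : y ∈ N) :
    a • y = 0 := by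
  rcases h a ⟨w, hw⟩ (Subtype.ext haw) with hw' | hall
  · exact absurd (congrArg Subtype.val hw') hw0
  · exact congrArg Subtype.val (hall ⟨y, hy⟩)

theorem exists_ne_zero_mem_span_singleton_inf
    (huniform : ∀ N N' : Submodule R M, N ≠ ⊥ → N' ≠ ⊥ → N ⊓ N' ≠ ⊥)
    {m x : M} (hm : m ≠ 0) (hx : x ≠ 0) :
    ∃ w ∈ span R {m} ⊓ span R {x}, w ≠ 0 :=
  (Submodule.ne_bot_iff _).mp <|
    huniform _ _ (span_singleton_eq_bot.not.mpr hm) (span_singleton_eq_bot.not.mpr hx)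

theorem isCompletelyPrime_of_forall_span_singleton
    (huniform : ∀ N N' : Submodule R M, N ≠ ⊥ → N' ≠ ⊥ → N ⊓ N' ≠ ⊥)
    (h : ∀ m : M, IsCompletelyPrime R (span R {m})) : IsCompletelyPrime R M := by
  intro a m ham
  refine or_iff_not_imp_left.mpr fun hm x ↦ ?_
  by_cases hx : x = 0
  · rw [hx, smul_zero]
  obtain ⟨w, ⟨hwm, hwx⟩, hw0⟩ := exists_ne_zero_mem_span_singleton_inf huniform hm hx
  have haw : a • w = 0 := (h m).smul_eq_zero_of_mem (mem_span_singleton_self m) hm ham hwm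
  exact (h x).smul_eq_zero_of_mem hwx hw0 haw (mem_span_singleton_self x)

end Module

theorem uniform_completely_prime_iff_cyclic_general
    {R M : Type*} [Ring R] [AddCommGroup M] [Module R M]
    (huniform : ∀ N N' : Submodule R M, N ≠ ⊥ → N' ≠ ⊥ → N ⊓ N' ≠ ⊥) :
    (∀ (a : R) (m : M), a • m = 0 → m = 0 ∨ ∀ x : M, a • x = 0) ↔
      (∀ m : M, ∀ (a : R) (x : Submodule.span R {m}),
        a • x = 0 → x = 0 ∨ ∀ y : Submodule.span R {m}, a • y = 0) :=
  ⟨fun h m ↦ Module.IsCompletelyPrime.submodule h _,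
    Module.isCompletelyPrime_of_forall_span_singleton huniform⟩

theorem uniform_completely_prime_iff_cyclic
    {R M : Type*} [Ring R] [AddCommGroup M] [Module R M]
    (hRM : ∃ (r : R) (m : M), r • m ≠ 0)
    (huniform : ∀ N N' : Submodule R M, N ≠ ⊥ → N' ≠ ⊥ → N ⊓ N' ≠ ⊥) :
    (∀ (a : R) (m : M), a • m = 0 → m = 0 ∨ ∀ x : M, a • x = 0) ↔
      (∀ m : M, ∀ (a : R) (x : Submodule.span R {m}),
        a • x = 0 → x = 0 ∨ ∀ y : Submodule.span R {m}, a • y = 0) :=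
  uniform_completely_prime_iff_cyclic_general huniform
end

section
/- Let M be a torsionless R-module (for every nonzero m ∈ M there exists f ∈ Hom_R(M, R) with f(m) ≠ 0) with RM ≠ 0. If R is a domain, then M is a completely prime module. -/
theorem Module.isTorsionFree_of_forall_exists_apply_ne_zero {R M : Type*} [Ring R]
    [AddCommGroup M] [Module R M] (htl : ∀ m : M, m ≠ 0 → ∃ f : M →ₗ[R] R, f m ≠ 0) :
    Module.IsTorsionFree R M := by
  let eval : M →ₗ[R] (M →ₗ[R] R) → R := LinearMap.pi fun f => f
  have eval_injective : Function.Injective eval := by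
    refine (injective_iff_map_eq_zero eval).mpr fun m hm => ?_
    by_contra hm_ne
    obtain ⟨f, hf⟩ := htl m hm_ne
    exact hf (congr_fun hm f)
  exact eval_injective.moduleIsTorsionFree eval eval.map_smul

theorem torsionless_over_domain_completely_prime_general
    {R M : Type*} [Ring R] [IsDomain R] [AddCommGroup M] [Module R M]
    (htl : ∀ m : M, m ≠ 0 → ∃ f : M →ₗ[R] R, f m ≠ 0) :
    ∀ (a : R) (m : M), a • m = 0 → m = 0 ∨ ∀ x : M, a • x = 0 := by
  have := Module.isTorsionFree_of_forall_exists_apply_ne_zero htl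
  intro a m ham
  rcases smul_eq_zero.mp ham with rfl | hm
  · exact Or.inr fun x => zero_smul R x
  · exact Or.inl hm

theorem torsionless_over_domain_completely_prime
    {R M : Type*} [Ring R] [IsDomain R] [AddCommGroup M] [Module R M]
    (hRM : ∃ (r : R) (m : M), r • m ≠ 0)
    (htl : ∀ m : M, m ≠ 0 → ∃ f : M →ₗ[R] R, f m ≠ 0) :
    ∀ (a : R) (m : M), a • m = 0 → m = 0 ∨ ∀ x : M, a • x = 0 :=
  torsionless_over_domain_completely_prime_general htl
end

section
/- An R-module M with RM ≠ 0 is completely co-prime if and only if every proper submodule of M is a completely prime submodule (i.e., M is fully completely prime). -/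
/-!
Suppose every proper submodule is completely prime and `r • M ⊆ N` for a proper `N`. Complete
primeness of `R • (r • r • x)` at the element `r • x` gives `r • x = (s * r) • (r • x)` for some `s`,
so `1 - s * r` kills `r • x`. Complete primeness of `⊥` then yields `r • x = 0`, or that `1 - s * r`
kills `M`; in the latter case every `y = s • (r • y)` lies in `N`, contradicting `N ≠ ⊤`.
-/

namespace Module

variable (R M : Type*) [Ring R] [AddCommGroup M] [Module R M]

def IsCompletelyCoprime : Prop :=
  ∀ (N : Submodule R M) (m : M), m ∉ N → {r : R | r • m ∈ N} = {r : R | ∀ x : M, r • x = 0}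

def IsFullyCompletelyPrime : Prop :=
  ∀ N : Submodule R M, N ≠ ⊤ → ∀ (a : R) (m : M), a • m ∈ N → m ∈ N ∨ ∀ x : M, a • x ∈ N

variable {R M}

theorem IsCompletelyCoprime.isFullyCompletelyPrime (h : IsCompletelyCoprime R M) :
    IsFullyCompletelyPrime R M := by
  intro N _ a m ham
  by_cases hm : m ∈ N
  · exact Or.inl hm
  · have ha : a ∈ {r : R | ∀ x : M, r • x = 0} := h N m hm ▸ ham
    exact Or.inr fun x => (ha x).symm ▸ N.zero_mem

namespace IsFullyCompletelyPrime

variable (h : IsFullyCompletelyPrime R M)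
include h

theorem smul_mem_span_smul_smul (r : R) (x : M) : r • x ∈ Submodule.span R {r • r • x} := by
  by_cases htop : Submodule.span R {r • r • x} = ⊤
  · exact htop ▸ Submodule.mem_top
  · rcases h _ htop r (r • x) (Submodule.mem_span_singleton_self _) with hrx | hr
    · exact hrx
    · exact hr x

theorem smul_eq_zero_of_smul_mem {N : Submodule R M} (hN : N ≠ ⊤) {r : R}
    (hr : ∀ y : M, r • y ∈ N) (x : M) : r • x = 0 := by
  obtain ⟨s, hs⟩ := Submodule.mem_span_singleton.mp (h.smul_mem_span_smul_smul r x)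
  have hkill : (1 - s * r) • (r • x) = 0 := by
    rw [sub_smul, one_smul, mul_smul, hs, sub_self]
  by_cases hbot : (⊥ : Submodule R M) = ⊤
  · have hrx : r • x ∈ (⊥ : Submodule R M) := hbot ▸ Submodule.mem_top
    simpa using hrx
  rcases h ⊥ hbot (1 - s * r) (r • x) (by simpa using hkill) with hrx | hann
  · simpa using hrx
  · refine absurd (N.eq_top_iff'.mpr fun y => ?_) hN
    have hy : y = s • (r • y) := by
      have := Submodule.mem_bot R |>.mp (hann y)
      rwa [sub_smul, one_smul, mul_smul, sub_eq_zero] at this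
    exact hy ▸ N.smul_mem s (hr y)

theorem isCompletelyCoprime : IsCompletelyCoprime R M := by
  intro N m hm
  ext r
  refine ⟨fun hrm => ?_, fun hr => show r • m ∈ N from (hr m).symm ▸ N.zero_mem⟩
  have hN : N ≠ ⊤ := fun e => hm (e ▸ Submodule.mem_top)
  exact h.smul_eq_zero_of_smul_mem hN ((h N hN r m hrm).resolve_left hm)

end IsFullyCompletelyPrime

end Module

theorem completely_coprime_iff_fully_completely_prime_general
    {R M : Type*} [Ring R] [AddCommGroup M] [Module R M] :
    (∀ (N : Submodule R M) (m : M), m ∉ N →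
        {r : R | r • m ∈ N} = {r : R | ∀ x : M, r • x = 0}) ↔
      (∀ N : Submodule R M, N ≠ ⊤ →
        ∀ (a : R) (m : M), a • m ∈ N → m ∈ N ∨ ∀ x : M, a • x ∈ N) :=
  ⟨Module.IsCompletelyCoprime.isFullyCompletelyPrime,
    Module.IsFullyCompletelyPrime.isCompletelyCoprime⟩

theorem completely_coprime_iff_fully_completely_prime
    {R M : Type*} [Ring R] [AddCommGroup M] [Module R M]
    (hRM : ∃ (r : R) (m : M), r • m ≠ 0) :
    (∀ (N : Submodule R M) (m : M), m ∉ N →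
        {r : R | r • m ∈ N} = {r : R | ∀ x : M, r • x = 0}) ↔
      (∀ N : Submodule R M, N ≠ ⊤ →
        ∀ (a : R) (m : M), a • m ∈ N → m ∈ N ∨ ∀ x : M, a • x ∈ N) :=
  completely_coprime_iff_fully_completely_prime_general
end

section
/- If M is a fully prime module over a left-duo ring R, then M is fully completely prime. -/
/-! In a left-duo ring the principal left ideal `R a` is two-sided, so `a r = s a` for some `s`.
Hence `a • m ∈ P` gives `(a r) • m = s • (a • m) ∈ P` for every `r`, which is the hypothesis of
primeness of `P`. -/

theorem exists_mul_eq_mul_of_left_duo {R : Type*} [Ring R]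
    (hduo : ∀ (I : Submodule R R), ∀ x ∈ I, ∀ r : R, x * r ∈ I) (a r : R) :
    ∃ s : R, s * a = a * r :=
  Submodule.mem_span_singleton.mp (hduo _ a (Submodule.mem_span_singleton_self a) r)

theorem mul_smul_mem_of_left_duo {R M : Type*} [Ring R] [AddCommGroup M] [Module R M]
    (hduo : ∀ (I : Submodule R R), ∀ x ∈ I, ∀ r : R, x * r ∈ I)
    (P : Submodule R M) {a : R} {m : M} (ham : a • m ∈ P) (r : R) :
    (a * r) • m ∈ P := by
  obtain ⟨s, hs⟩ := exists_mul_eq_mul_of_left_duo hduo a r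
  rw [← hs, mul_smul]
  exact P.smul_mem s ham

theorem fully_prime_left_duo_fully_completely_prime_general
    {R M : Type*} [Ring R] [AddCommGroup M] [Module R M]
    (hduo : ∀ (I : Submodule R R), ∀ x ∈ I, ∀ r : R, x * r ∈ I)
    (hfp : ∀ P : Submodule R M, P ≠ ⊤ →
      ∀ (a : R) (m : M), (∀ r : R, (a * r) • m ∈ P) → m ∈ P ∨ ∀ x : M, a • x ∈ P) :
    ∀ P : Submodule R M, P ≠ ⊤ →
      ∀ (a : R) (m : M), a • m ∈ P → m ∈ P ∨ ∀ x : M, a • x ∈ P :=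
  fun P hP a m ham => hfp P hP a m (mul_smul_mem_of_left_duo hduo P ham)

theorem fully_prime_left_duo_fully_completely_prime
    {R M : Type*} [Ring R] [AddCommGroup M] [Module R M]
    (hRM : ∃ (r : R) (m : M), r • m ≠ 0)
    (hduo : ∀ (I : Submodule R R), ∀ x ∈ I, ∀ r : R, x * r ∈ I)
    (hfp : ∀ P : Submodule R M, P ≠ ⊤ →
      ∀ (a : R) (m : M), (∀ r : R, (a * r) • m ∈ P) → m ∈ P ∨ ∀ x : M, a • x ∈ P) :
    ∀ P : Submodule R M, P ≠ ⊤ →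
      ∀ (a : R) (m : M), a • m ∈ P → m ∈ P ∨ ∀ x : M, a • x ∈ P :=
  fully_prime_left_duo_fully_completely_prime_general hduo hfp
end

section
/- Over a class of IFP modules, faithful completely prime modules are closed under essential extensions: if N is an essential submodule of an IFP module M and N is a faithful completely prime module, then M is a faithful completely prime module. -/
/-!
Let `a • m = 0` with `m ≠ 0`. By essentiality some multiple `r • m` is a nonzero element of `N`,
and by the IFP property `a • (r • m) = 0`. Complete primeness of `N` then gives `a • N = 0`,
so `a = 0` by faithfulness of `N`. Faithfulness of `M` is inherited directly from that of `N`.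
-/

section

variable {R M : Type*} [Ring R] [AddCommGroup M] [Module R M]

theorem Submodule.exists_smul_mem_ne_zero_of_essential {N : Submodule R M}
    (hess : ∀ K : Submodule R M, K ≠ ⊥ → N ⊓ K ≠ ⊥) {m : M} (hm : m ≠ 0) :
    ∃ r : R, r • m ∈ N ∧ r • m ≠ 0 := by
  have hspan : Submodule.span R {m} ≠ ⊥ := by
    rwa [Ne, Submodule.span_singleton_eq_bot]
  obtain ⟨n, ⟨hnN, hnm⟩, hn0⟩ := (Submodule.ne_bot_iff _).mp (hess _ hspan)
  obtain ⟨r, rfl⟩ := Submodule.mem_span_singleton.mp hnm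
  exact ⟨r, hnN, hn0⟩

theorem eq_zero_of_smul_eq_zero_of_essential
    (hIFP : ∀ (a : R) (m : M), a • m = 0 → ∀ r : R, a • (r • m) = 0)
    {N : Submodule R M} (hess : ∀ K : Submodule R M, K ≠ ⊥ → N ⊓ K ≠ ⊥)
    (hNfaith : ∀ r : R, (∀ n ∈ N, r • n = 0) → r = 0)
    (hNcp : ∀ a : R, ∀ n ∈ N, a • n = 0 → n = 0 ∨ ∀ n' ∈ N, a • n' = 0)
    {a : R} {m : M} (ham : a • m = 0) (hm : m ≠ 0) : a = 0 := by
  obtain ⟨r, hrmN, hrm0⟩ := N.exists_smul_mem_ne_zero_of_essential hess hm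
  have hannN : ∀ n' ∈ N, a • n' = 0 :=
    (hNcp a _ hrmN (hIFP a m ham r)).resolve_left hrm0
  exact hNfaith a hannN

end

theorem faithful_completely_prime_essential_extension_general
    {R M : Type*} [Ring R] [AddCommGroup M] [Module R M]
    (hIFP : ∀ (a : R) (m : M), a • m = 0 → ∀ r : R, a • (r • m) = 0)
    (N : Submodule R M)
    (hess : ∀ K : Submodule R M, K ≠ ⊥ → N ⊓ K ≠ ⊥)
    (hNfaith : ∀ r : R, (∀ n ∈ N, r • n = 0) → r = 0)
    (hNcp : ∀ a : R, ∀ n ∈ N, a • n = 0 → n = 0 ∨ ∀ n' ∈ N, a • n' = 0) :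
    (∀ r : R, (∀ x : M, r • x = 0) → r = 0) ∧
      (∀ (a : R) (m : M), a • m = 0 → m = 0 ∨ ∀ x : M, a • x = 0) := by
  refine ⟨fun r hr => hNfaith r fun n _ => hr n, fun a m ham => ?_⟩
  by_cases hm : m = 0
  · exact .inl hm
  · have ha : a = 0 := eq_zero_of_smul_eq_zero_of_essential hIFP hess hNfaith hNcp ham hm
    exact .inr fun x => by rw [ha, zero_smul]

theorem faithful_completely_prime_essential_extension
    {R M : Type*} [Ring R] [AddCommGroup M] [Module R M]
    (hIFP : ∀ (a : R) (m : M), a • m = 0 → ∀ r : R, a • (r • m) = 0)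
    (N : Submodule R M)
    (hess : ∀ K : Submodule R M, K ≠ ⊥ → N ⊓ K ≠ ⊥)
    (hRN : ∃ r : R, ∃ n ∈ N, r • n ≠ 0)
    (hNfaith : ∀ r : R, (∀ n ∈ N, r • n = 0) → r = 0)
    (hNcp : ∀ a : R, ∀ n ∈ N, a • n = 0 → n = 0 ∨ ∀ n' ∈ N, a • n' = 0) :
    (∀ r : R, (∀ x : M, r • x = 0) → r = 0) ∧
      (∀ (a : R) (m : M), a • m = 0 → m = 0 ∨ ∀ x : M, a • x = 0) :=
  faithful_completely_prime_essential_extension_general hIFP N hess hNfaith hNcp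
end
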